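/- Let d ∈ ℕ, 0 ≤ s < d/2, 0 < b < min{4, d, 3d/2 − s, d/2 + 2 − s} and 0 < σ < (8−2b)/(d−2s). Then there exist real numbers a₂ ∈ [2,∞] and b₂ ∈ [2,∞) such that: (i) max{0, d/2 − b − dσ/2} < d/b₂ < min{d/2, d − (σ+1)(d−2s−4)/2}; (ii) (d−2s−4)σ/2 − 2 < 4/a₂ < dσ/2 + b + s; and (iii) d/2 − d/b₂ ≤ 4/a₂ ≤ min{2, d − 2d/b₂, s + d/2 − d/b₂}. -/

import Mathlib

/-!
Everything is governed by the single number `A = 4/a₂`: taking `d/b₂ = d/2 - A` makes the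
three constraints of (iii) automatic for `0 ≤ A ≤ 2`, and reduces (i) and (ii) to
`max 0 ((d - 2s - 4)σ/2 - 2) < A < min (b + dσ/2) (d/2)`. This window is nonempty because
`σ (d - 2s) < 8 - 2b` forces `(d - 2s - 4)σ/2 - 2 < 2 - b`.
-/

open ENNReal

lemma ENNReal.exists_two_le_and_toReal_four_div_eq {A : ℝ} (hA0 : 0 ≤ A) (hA2 : A ≤ 2) :
    ∃ a : ℝ≥0∞, 2 ≤ a ∧ (4 / a).toReal = A := by
  refine ⟨4 / ENNReal.ofReal A, ?_, ?_⟩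
  · rw [ENNReal.le_div_iff_mul_le (by simp) (by simp)]
    calc 2 * ENNReal.ofReal A ≤ 2 * 2 := by gcongr; exact ENNReal.ofReal_le_of_le_toReal hA2
      _ = 4 := by norm_num
  · rw [ENNReal.div_div_cancel (by simp) (by simp), ENNReal.toReal_ofReal hA0]

lemma exponent_window_nonempty {d s b σ : ℝ} (hs0 : 0 ≤ s) (hs : s < d / 2) (hb0 : 0 < b)
    (hσ0 : 0 < σ) (hσ : σ < (8 - 2 * b) / (d - 2 * s)) :
    max 0 ((d - 2 * s - 4) * σ / 2 - 2) < min (min (b + d * σ / 2) (d / 2)) 2 := by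
  have hd : 0 < d := by linarith
  have hσ' : σ * (d - 2 * s) < 8 - 2 * b := (lt_div_iff₀ (by linarith)).mp hσ
  have hdσ : 0 < d * σ := mul_pos hd hσ0
  have hsσ : 0 ≤ s * σ := mul_nonneg hs0 hσ0.le
  refine max_lt (lt_min (lt_min (by linarith) (by linarith)) two_pos)
    (lt_min (lt_min (by linarith) ?_) (by linarith))
  rcases le_or_gt 4 d with h4 | h4
  · linarith
  · nlinarith [mul_neg_of_neg_of_pos (show d - 2 * s - 4 < 0 by linarith) hσ0]

theorem exponent_system_subcritical_general (d : ℕ) (s b σ : ℝ)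
    (hs0 : 0 ≤ s) (hs : s < (d : ℝ) / 2)
    (hb0 : 0 < b)
    (hσ0 : 0 < σ) (hσ : σ < (8 - 2 * b) / ((d : ℝ) - 2 * s)) :
    ∃ a₂ : ℝ≥0∞, 2 ≤ a₂ ∧ ∃ b₂ : ℝ, 2 ≤ b₂ ∧
      (max 0 ((d : ℝ) / 2 - b - (d : ℝ) * σ / 2) < (d : ℝ) / b₂ ∧
        (d : ℝ) / b₂ < min ((d : ℝ) / 2) ((d : ℝ) - (σ + 1) * ((d : ℝ) - 2 * s - 4) / 2)) ∧
      (((d : ℝ) - 2 * s - 4) * σ / 2 - 2 < ((4 : ℝ≥0∞) / a₂).toReal ∧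
        ((4 : ℝ≥0∞) / a₂).toReal < (d : ℝ) * σ / 2 + b + s) ∧
      ((d : ℝ) / 2 - (d : ℝ) / b₂ ≤ ((4 : ℝ≥0∞) / a₂).toReal ∧
        ((4 : ℝ≥0∞) / a₂).toReal ≤
          min (min 2 ((d : ℝ) - 2 * (d : ℝ) / b₂)) (s + (d : ℝ) / 2 - (d : ℝ) / b₂)) := by
  obtain ⟨A, hA_lo, hA_hi⟩ := exists_between (exponent_window_nonempty hs0 hs hb0 hσ0 hσ)
  simp only [max_lt_iff, lt_min_iff] at hA_lo hA_hi
  obtain ⟨a₂, ha₂, hA⟩ := ENNReal.exists_two_le_and_toReal_four_div_eq hA_lo.1.le hA_hi.2.le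
  have hd : (d : ℝ) ≠ 0 := by linarith
  refine ⟨a₂, ha₂, d / (d / 2 - A), ?_, ?_⟩
  · rw [le_div_iff₀ (by linarith)]
    linarith
  rw [hA, mul_div_assoc (2 : ℝ), div_div_cancel₀ hd]
  have hsσ : 0 ≤ s * σ := mul_nonneg hs0 hσ0.le
  simp only [max_lt_iff, lt_min_iff, le_min_iff]
  refine ⟨⟨⟨?_, ?_⟩, ?_, ?_⟩, ⟨?_, ?_⟩, ?_, ⟨?_, ?_⟩, ?_⟩ <;> linarith

/-- The arithmetic claim that the system (3.29) of exponent inequalities admits a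
solution `(a₂, b₂)` with `a₂ ∈ [2,∞]` and `b₂ ∈ [2,∞)`. -/
theorem exponent_system_subcritical (d : ℕ) (hd : 0 < d) (s b σ : ℝ)
    (hs0 : 0 ≤ s) (hs : s < (d : ℝ) / 2)
    (hb0 : 0 < b)
    (hb : b < min (min 4 (d : ℝ)) (min (3 * (d : ℝ) / 2 - s) ((d : ℝ) / 2 + 2 - s)))
    (hσ0 : 0 < σ) (hσ : σ < (8 - 2 * b) / ((d : ℝ) - 2 * s)) :
    ∃ a₂ : ℝ≥0∞, 2 ≤ a₂ ∧ ∃ b₂ : ℝ, 2 ≤ b₂ ∧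
      (max 0 ((d : ℝ) / 2 - b - (d : ℝ) * σ / 2) < (d : ℝ) / b₂ ∧
        (d : ℝ) / b₂ < min ((d : ℝ) / 2) ((d : ℝ) - (σ + 1) * ((d : ℝ) - 2 * s - 4) / 2)) ∧
      (((d : ℝ) - 2 * s - 4) * σ / 2 - 2 < ((4 : ℝ≥0∞) / a₂).toReal ∧
        ((4 : ℝ≥0∞) / a₂).toReal < (d : ℝ) * σ / 2 + b + s) ∧
      ((d : ℝ) / 2 - (d : ℝ) / b₂ ≤ ((4 : ℝ≥0∞) / a₂).toReal ∧
        ((4 : ℝ≥0∞) / a₂).toReal ≤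
          min (min 2 ((d : ℝ) - 2 * (d : ℝ) / b₂)) (s + (d : ℝ) / 2 - (d : ℝ) / b₂)) :=
  exponent_system_subcritical_general d s b σ hs0 hs hb0 hσ0 hσ
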